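/- Let q*(θ) = (1/Z) p(θ) Π_{j=1}^M t*_j(θ) be a density, where p is a prior density and t*_j are positive factors. For each j and k = 1, …, N_j define L*_{j,k}(q) = ∫ q(θ) log( q*(θ) p(x_{j,k}|θ)^{N_j} / (q(θ) t*_j(θ)) ) dθ, and let L(q) = ∫ q(θ) log( p(θ) p(x|θ) / q(θ) ) dθ with p(x|θ) = Π_{j=1}^M Π_{k=1}^{N_j} p(x_{j,k}|θ). Then Σ_{j=1}^M (1/N_j) Σ_{k=1}^{N_j} L*_{j,k}(q*) = L(q*) − log Z. -/

import Mathlib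

open MeasureTheory Real

/-- at a fixed point `q*(θ) = (1/Z) p(θ) Π_j t*_j(θ)` of PVI with local
averaging, the weighted sum of the local ELBOs equals the global ELBO minus `log Z`:
`Σ_j (1/N_j) Σ_k L*_{j,k}(q*) = L(q*) − log Z`. -/
theorem stmt_10 {α : Type*} [MeasurableSpace α] (μ : Measure α)
    (M : ℕ) (N : Fin M → ℕ) (hN : ∀ j, 1 ≤ N j)
    (p : α → ℝ)                             -- prior density
    (t : Fin M → α → ℝ)                     -- approximate likelihood factors t*_j
    (lik : (j : Fin M) → Fin (N j) → α → ℝ) -- shard likelihoods θ ↦ p(x_{j,k}|θ)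
    (Z : ℝ) (hZpos : 0 < Z)
    (qStar : α → ℝ)
    (hqStar : ∀ θ, qStar θ = Z⁻¹ * (p θ * ∏ j, t j θ))
    (hqProb : (∫ θ, qStar θ ∂μ) = 1)
    (hpos : ∀ θ, 0 < p θ ∧ (∀ j, 0 < t j θ) ∧ ∀ j k, 0 < lik j k θ)
    (hint : ∀ j k, Integrable
      (fun θ => qStar θ * log (qStar θ * (lik j k θ) ^ (N j) / (qStar θ * t j θ))) μ)
    (hintGlobal : Integrable
      (fun θ => qStar θ * log (p θ * (∏ j, ∏ k, lik j k θ) / qStar θ)) μ) :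
    ∑ j, ((N j : ℝ)⁻¹ *
        ∑ k, ∫ θ, qStar θ * log (qStar θ * (lik j k θ) ^ (N j) / (qStar θ * t j θ)) ∂μ) =
      (∫ θ, qStar θ * log (p θ * (∏ j, ∏ k, lik j k θ) / qStar θ) ∂μ) - log Z := by
  have hqpos : ∀ θ, 0 < qStar θ := by
    intro θ
    rw [hqStar θ]
    have hp := (hpos θ).1
    have ht : 0 < ∏ j, t j θ := Finset.prod_pos fun j _ => (hpos θ).2.1 j
    positivity
  have hq : Integrable qStar μ := integrable_of_integral_eq_one hqProb
  have hloc : ∀ (j : Fin M) (k : Fin (N j)) θ,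
      qStar θ * log (qStar θ * (lik j k θ) ^ (N j) / (qStar θ * t j θ))
        = qStar θ * ((N j : ℝ) * log (lik j k θ) - log (t j θ)) := by
    intro j k θ
    have hq0 : qStar θ ≠ 0 := (hqpos θ).ne'
    have ht0 : t j θ ≠ 0 := ((hpos θ).2.1 j).ne'
    have hl0 : lik j k θ ≠ 0 := ((hpos θ).2.2 j k).ne'
    rw [mul_div_mul_left _ _ hq0, log_div (pow_ne_zero _ hl0) ht0, log_pow]
  have hglob : ∀ θ,
      qStar θ * log (p θ * (∏ j, ∏ k, lik j k θ) / qStar θ)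
        = qStar θ * ((∑ j, ∑ k, log (lik j k θ)) - ∑ j, log (t j θ))
          + qStar θ * log Z := by
    intro θ
    have hp0 : p θ ≠ 0 := (hpos θ).1.ne'
    have ht0 : ∀ j, t j θ ≠ 0 := fun j => ((hpos θ).2.1 j).ne'
    have hl0 : ∀ j k, lik j k θ ≠ 0 := fun j k => ((hpos θ).2.2 j k).ne'
    have hPk : ∀ j : Fin M, (∏ k, lik j k θ) ≠ 0 :=
      fun j => Finset.prod_ne_zero_iff.2 fun k _ => hl0 j k
    have hPl : (∏ j, ∏ k, lik j k θ) ≠ 0 :=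
      Finset.prod_ne_zero_iff.2 fun j _ => hPk j
    have hPt : (∏ j, t j θ) ≠ 0 := Finset.prod_ne_zero_iff.2 fun j _ => ht0 j
    have hq0 : qStar θ ≠ 0 := (hqpos θ).ne'
    have hrw : qStar θ = Z⁻¹ * (p θ * ∏ j, t j θ) := hqStar θ
    rw [log_div (mul_ne_zero hp0 hPl) hq0, log_mul hp0 hPl, hrw]
    rw [log_mul (inv_ne_zero hZpos.ne') (mul_ne_zero hp0 hPt),
        log_mul hp0 hPt, log_inv,
        Real.log_prod (fun j _ => hPk j),
        Real.log_prod (fun j _ => ht0 j)]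
    have hinner : ∀ j : Fin M, log (∏ k, lik j k θ) = ∑ k, log (lik j k θ) :=
      fun j => Real.log_prod (fun k _ => hl0 j k)
    simp only [hinner]
    ring
  have hint' : ∀ (j : Fin M) (k : Fin (N j)), Integrable
      (fun θ => qStar θ * ((N j : ℝ) * log (lik j k θ) - log (t j θ))) μ := by
    intro j k
    have := hint j k
    simpa only [hloc] using this
  simp only [hloc]
  have step1 : ∀ j : Fin M,
      (N j : ℝ)⁻¹ * ∑ k, ∫ θ, qStar θ * ((N j : ℝ) * log (lik j k θ) - log (t j θ)) ∂μ
        = ∫ θ, (N j : ℝ)⁻¹ * ∑ k, qStar θ * ((N j : ℝ) * log (lik j k θ) - log (t j θ)) ∂μ := by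
    intro j
    rw [← integral_finset_sum _ fun k _ => hint' j k, integral_const_mul]
  simp only [step1]
  rw [← integral_finset_sum _ fun j _ =>
    ((integrable_finset_sum _ fun k _ => hint' j k).const_mul _)]
  have hptwise : ∀ θ,
      (∑ j, (N j : ℝ)⁻¹ * ∑ k, qStar θ * ((N j : ℝ) * log (lik j k θ) - log (t j θ)))
        = qStar θ * ((∑ j, ∑ k, log (lik j k θ)) - ∑ j, log (t j θ)) := by
    intro θ
    rw [← Finset.sum_sub_distrib, Finset.mul_sum]
    refine Finset.sum_congr rfl fun j _ => ?_
    have hN0 : (N j : ℝ) ≠ 0 := Nat.cast_ne_zero.2 (Nat.one_le_iff_ne_zero.1 (hN j))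
    have key : ∀ k : Fin (N j), qStar θ * ((N j : ℝ) * log (lik j k θ) - log (t j θ))
        = (N j : ℝ) * (qStar θ * log (lik j k θ)) - qStar θ * log (t j θ) := fun k => by ring
    rw [Finset.sum_congr rfl fun k _ => key k, Finset.sum_sub_distrib, ← Finset.mul_sum,
      Finset.sum_const, Finset.card_univ, Fintype.card_fin, nsmul_eq_mul]
    conv_rhs => rw [mul_sub, Finset.mul_sum]
    rw [← mul_sub, inv_mul_cancel_left₀ hN0]
  simp only [hptwise]
  simp only [hglob]
  have hA : Integrable
      (fun θ => qStar θ * ((∑ j, ∑ k, log (lik j k θ)) - ∑ j, log (t j θ))) μ := by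
    have heq : (fun θ => qStar θ * ((∑ j, ∑ k, log (lik j k θ)) - ∑ j, log (t j θ)))
        = fun θ => qStar θ * log (p θ * (∏ j, ∏ k, lik j k θ) / qStar θ) - qStar θ * log Z := by
      funext θ; rw [hglob θ]; ring
    rw [heq]
    exact hintGlobal.sub (hq.mul_const _)
  rw [integral_add hA (hq.mul_const _), integral_mul_const, hqProb, one_mul]
  ring
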